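/- In Catt_sa, if Δ ⊢ u : A, then for every n < dim(A) and ε ∈ {−,+}, the n-th boundary of the term agrees with the n-th boundary of its type up to definitional equality: δ^ε_n(u) = A^ε_n. -/

import Mathlib

namespace Catt

/-- The countably infinite set of variables. -/
abbrev V : Type := ℕ

-- raw syntax
mutual
inductive Ctx : Type
  | nil : Ctx
  | ext : Ctx → V → Ty → Ctx
inductive Sub : Type
  | nil : Sub
  | ext : Sub → V → Tm → Sub
inductive Ty : Type
  | star : Ty
  | arr : Tm → Ty → Tm → Ty
inductive Tm : Type
  | var : V → Tm
  | coh : Ctx → Ty → Sub → Tm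
end

def Ty.dim : Ty → ℕ
  | .star => 0
  | .arr _ A _ => A.dim + 1

def Ctx.dim : Ctx → ℕ
  | .nil => 0
  | .ext Γ _ A => max Γ.dim A.dim

def Ctx.lookup : Ctx → V → Ty
  | .nil, _ => .star
  | .ext Γ x A, y => if x = y then A else Γ.lookup y

def Ctx.vars : Ctx → List V
  | .nil => []
  | .ext Γ x _ => Γ.vars ++ [x]

def Ctx.varset (Γ : Ctx) : Finset V := Γ.vars.toFinset

def Ctx.decls : Ctx → List (V × Ty)
  | .nil => []
  | .ext Γ x A => Γ.decls ++ [(x, A)]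

def Sub.find : Sub → V → Tm
  | .nil, x => .var x
  | .ext σ y t, x => if y = x then t else σ.find x

def Sub.terms : Sub → List Tm
  | .nil => []
  | .ext σ _ t => σ.terms ++ [t]

-- substitution application and composition
mutual
def Tm.sub : Tm → Sub → Tm
  | .var x, σ => σ.find x
  | .coh Γ A τ, σ => .coh Γ A (Sub.comp τ σ)
def Ty.sub : Ty → Sub → Ty
  | .star, _ => .star
  | .arr s A t, σ => .arr (Tm.sub s σ) (Ty.sub A σ) (Tm.sub t σ)
def Sub.comp : Sub → Sub → Sub
  | .nil, _ => .nil
  | .ext τ x t, σ => .ext (Sub.comp τ σ) x (Tm.sub t σ)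
end

-- free variables
mutual
def Tm.fv : Tm → Finset V
  | .var x => {x}
  | .coh _ _ σ => Sub.fv σ
def Ty.fv : Ty → Finset V
  | .star => ∅
  | .arr s A t => Tm.fv s ∪ Ty.fv A ∪ Tm.fv t
def Sub.fv : Sub → Finset V
  | .nil => ∅
  | .ext σ _ t => Sub.fv σ ∪ Tm.fv t
end

/-- The support of a single variable in a context. -/
def Ctx.suppVar : Ctx → V → Finset V
  | .nil, v => {v}
  | .ext Γ x A, v =>
      if x = v then insert x ((Ty.fv A).biUnion (fun w => Γ.suppVar w))
      else Γ.suppVar v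

/-- The support of a set of variables in a context. -/
def suppOf (Γ : Ctx) (s : Finset V) : Finset V := s.biUnion (fun w => Γ.suppVar w)

end Catt
-- part 2 (appended to pre1 contents for testing)
namespace Catt

/-- `A^ε_m` : the m-dimensional source (ε = false) or target (ε = true) of a type. -/
def Ty.bdry (ε : Bool) (m : ℕ) : Ty → Tm
  | .star => .var 0
  | .arr s A t => if A.dim = m then (if ε then t else s) else Ty.bdry ε m A

def Tm.dim (Γ : Ctx) : Tm → ℕ
  | .var x => (Γ.lookup x).dim
  | .coh _ A _ => A.dim

/-- `δ^ε_n` : the n-dimensional source/target of a term in a context. -/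
def Tm.bdry (Γ : Ctx) (ε : Bool) (n : ℕ) (t : Tm) : Tm :=
  if Tm.dim Γ t = n then t
  else match t with
    | .var x => Ty.bdry ε n (Γ.lookup x)
    | .coh _ A σ => Tm.sub (Ty.bdry ε n A) σ

/-- codimension-1 source of a term. -/
def Tm.src (Γ : Ctx) (t : Tm) : Tm := Tm.bdry Γ false (Tm.dim Γ t - 1) t
/-- codimension-1 target of a term. -/
def Tm.tgt (Γ : Ctx) (t : Tm) : Tm := Tm.bdry Γ true (Tm.dim Γ t - 1) t

def Tm.isVarb : Tm → Bool
  | .var _ => true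
  | .coh _ _ _ => false

def Tm.isVarOf : Tm → V → Bool
  | .var y, x => y == x
  | .coh _ _ _, _ => false

def Ty.srcIs (x : V) : Ty → Bool
  | .arr s _ _ => s.isVarOf x
  | .star => false

def Ty.tgtIs (x : V) : Ty → Bool
  | .arr _ _ t => t.isVarOf x
  | .star => false

/-- The variable set of the boundary `∂^ε(Γ)` of a pasting context. -/
def Ctx.bdryVars (ε : Bool) (Γ : Ctx) : Finset V :=
  ((Γ.decls.filter fun p =>
      decide (p.2.dim + 1 < Γ.dim) ||
      (decide (p.2.dim + 1 = Γ.dim) &&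
        Γ.decls.all fun q => !(if ε then Ty.srcIs p.1 q.2 else Ty.tgtIs p.1 q.2))).map
    Prod.fst).toFinset

/-- The pasting context judgement `Γ ⊢_pd t : A`. -/
inductive Pd : Ctx → Tm → Ty → Prop
  | start (x : V) : Pd (.ext .nil x .star) (.var x) .star
  | up {Γ : Ctx} {x : Tm} {A : Ty} (y f : V) :
      Pd Γ x A → y ∉ Γ.varset → f ∉ Γ.varset → y ≠ f →
      Pd (.ext (.ext Γ y A) f (.arr x A (.var y))) (.var f) (.arr x A (.var y))
  | down {Γ : Ctx} {f x y : Tm} {A : Ty} :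
      Pd Γ f (.arr x A y) → Pd Γ y A

/-- `Γ ⊢_pd` : Γ is a pasting context. -/
def IsPd (Γ : Ctx) : Prop := ∃ x : Tm, Pd Γ x .star

-- a term/type contains no coherences
mutual
def Tm.noCoh : Tm → Prop
  | .var _ => True
  | .coh _ _ _ => False
def Ty.noCoh : Ty → Prop
  | .star => True
  | .arr s A t => Tm.noCoh s ∧ Ty.noCoh A ∧ Tm.noCoh t
end

/-- A globular context: one containing no coherences in its syntax tree. -/
def Ctx.globular : Ctx → Prop
  | .nil => True
  | .ext Γ _ A => Ctx.globular Γ ∧ Ty.noCoh A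

/-- The linear height of a type: the largest n such that all terms contained in it of
dimension below n are variables. -/
def Ty.lh : Ty → ℕ
  | .star => 0
  | .arr s A t => if A.lh = A.dim && s.isVarb && t.isVarb then A.dim + 1 else A.lh

end Catt
-- part 3: variable-labelled Batanin trees
namespace Catt

/-- Variable-labelled Batanin trees, in "alternating" form: `sing v` is the tree with
label list [v] and no branches; `branch v b r` is the tree whose first label is `v`,
whose first branch is `b` (sitting between `v` and the first label of `r`), and whose
remaining labels and branches are those of `r`. -/
inductive LTree : Type
  | sing : V → LTree
  | branch : V → LTree → LTree → LTree

def LTree.firstLabel : LTree → V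
  | .sing v => v
  | .branch v _ _ => v

def LTree.lastLabel : LTree → V
  | .sing v => v
  | .branch _ _ r => r.lastLabel

/-- The linear height of a tree. -/
def LTree.lh : LTree → ℕ
  | .sing _ => 0
  | .branch _ b (.sing _) => b.lh + 1
  | .branch _ _ (.branch _ _ _) => 0

/-- A tree is linear if every node has at most one branch. -/
def LTree.isLinear : LTree → Bool
  | .sing _ => true
  | .branch _ b (.sing _) => b.isLinear
  | .branch _ _ (.branch _ _ _) => false

def LTree.height : LTree → ℕ
  | .sing _ => 0
  | .branch _ b r => max (b.height + 1) r.height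

def LTree.allLabels : LTree → List V
  | .sing v => [v]
  | .branch v b r => v :: (b.allLabels ++ r.allLabels)

/-- A tree is well-labelled if all its labels are distinct. -/
def LTree.wellLabelled (T : LTree) : Prop := T.allLabels.Nodup

/-- The locally maximal variables of a tree: the labels of leaf nodes. -/
def LTree.locMax : LTree → List V
  | .sing v => [v]
  | .branch _ b (.sing _) => b.locMax
  | .branch _ b (.branch w b' r') => b.locMax ++ LTree.locMax (.branch w b' r')

/-- The topmost variable of a (linear) tree. -/
def LTree.topVar : LTree → V
  | .sing v => v
  | .branch _ b _ => b.topVar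

/-- The branching path of a (locally maximal) variable in a tree. -/
def LTree.bp (x : V) : LTree → List ℕ
  | .sing _ => [0]
  | .branch _ b r =>
      if x ∈ b.allLabels then (if b.isLinear then [0] else 0 :: b.bp x)
      else
        match r.bp x with
        | [] => []
        | n :: p => (n + 1) :: p

/-- graft T r : replace the trailing `sing` of `T` by the continuation of `r`. -/
def LTree.graft : LTree → LTree → LTree
  | .sing w, .sing _ => .sing w
  | .sing w, .branch _ b' r' => .branch w b' r'
  | .branch w b t, r => .branch w b (t.graft r)

/-- Replace the first label of a tree. -/
def LTree.setHead : LTree → V → LTree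
  | .sing _, w => .sing w
  | .branch _ b r, w => .branch w b r

/-- Insertion of the tree T into S along a path. -/
def LTree.ins : LTree → List ℕ → LTree → LTree
  | .sing v, _, _ => .sing v
  | .branch v b r, [], _ => .branch v b r
  | .branch _ _ r, [0], T => T.graft r
  | .branch v b r, 0 :: p, T =>
      match T with
      | .branch w0 T' rT => .branch w0 (b.ins p T') (r.setHead rT.firstLabel)
      | .sing _ => .branch v b r
  | .branch v b r, (n + 1) :: p, T => .branch v b (r.ins (n :: p) T)

-- the declarations of the pasting context of a tree
mutual
def LTree.ctxD : Ty → LTree → List (V × Ty)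
  | A, .sing v => [(v, A)]
  | A, .branch v b r => (v, A) :: LTree.ctxRest A (.var v) b r
  termination_by A T => sizeOf T
  decreasing_by all_goals (simp_wf; try omega)
def LTree.ctxRest : Ty → Tm → LTree → LTree → List (V × Ty)
  | A, prev, b, .sing w =>
      (w, A) :: LTree.ctxD (.arr prev A (.var w)) b
  | A, prev, b, .branch w b' r' =>
      ((w, A) :: LTree.ctxD (.arr prev A (.var w)) b) ++ LTree.ctxRest A (.var w) b' r'
  termination_by A prev b r => sizeOf b + sizeOf r
  decreasing_by all_goals (simp_wf; try omega)
end

def Ctx.ofDecls (l : List (V × Ty)) : Ctx := l.foldl (fun Γ p => .ext Γ p.1 p.2) .nil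

/-- `⌊T⌋` : the pasting context associated to a labelled Batanin tree. -/
def LTree.ctx (T : LTree) : Ctx := Ctx.ofDecls (LTree.ctxD .star T)

/-- The identity substitution of a context. -/
def Ctx.idSub : Ctx → Sub
  | .nil => .nil
  | .ext Γ x _ => .ext Γ.idSub x (.var x)

/-- ε-truncation of a tree at height k (tree-level boundary). -/
def LTree.trunc (ε : Bool) : ℕ → LTree → LTree
  | 0, T => .sing (if ε then T.lastLabel else T.firstLabel)
  | _ + 1, .sing v => .sing v
  | k + 1, .branch v b r => .branch v (LTree.trunc ε k b) (LTree.trunc ε (k + 1) r)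

-- unbiased terms and types of a tree, with fuel
mutual
def utmF : ℕ → LTree → Tm
  | 0, T => .var T.topVar
  | fuel + 1, T =>
      if T.isLinear then .var T.topVar
      else .coh T.ctx (utyF fuel T.height T) (Ctx.idSub T.ctx)
  termination_by fuel T => (fuel, 0)
def utyF : ℕ → ℕ → LTree → Ty
  | _, 0, _ => .star
  | fuel, k + 1, T =>
      .arr (utmF fuel (LTree.trunc false k T)) (utyF fuel k T)
        (utmF fuel (LTree.trunc true k T))
  termination_by fuel k T => (fuel, k + 1)
end

/-- The unbiased term of a pasting context (given as a tree). -/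
def LTree.utm (T : LTree) : Tm := utmF (T.height + 1) T
/-- The unbiased type of a pasting context (given as a tree). -/
def LTree.uty (T : LTree) : Ty := utyF (T.height + 1) T.height T

end Catt
-- part 4: insertion data, discs
namespace Catt

/-- The inserted tree `S ≪_x T`, inserting along the branching path of x. -/
def LTree.insTree (S : LTree) (x : V) (T : LTree) : LTree := S.ins (S.bp x) T

/-- The inserted pasting context `Δ ≪_x Θ`. -/
def insCtx (S : LTree) (x : V) (T : LTree) : Ctx := (S.insTree x T).ctx

/-- Build a substitution from a function on a list of variables. -/
def mkSub (f : V → Tm) (l : List V) : Sub := l.foldl (fun σ v => .ext σ v (f v)) .nil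

/-- The interior substitution `ι : Θ → Δ ≪_x Θ`, sending every variable to itself. -/
def iota (T : LTree) : Sub := Ctx.idSub T.ctx

/-- The exterior substitution `κ : Δ → Δ ≪_x Θ` determined by a type A over Θ. -/
def kappa (S : LTree) (x : V) (T : LTree) (A : Ty) : Sub :=
  let Δ : Ctx := S.ctx
  let I : Ctx := insCtx S x T
  let B : Ty := Δ.lookup x
  mkSub (fun y =>
    if y ∈ I.vars then .var y
    else
      match (List.range B.dim).findSome? (fun n =>
        if (Ty.bdry false n B).isVarOf y then some (Tm.sub (Ty.bdry false n A) (iota T))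
        else if (Ty.bdry true n B).isVarOf y then some (Tm.sub (Ty.bdry true n A) (iota T))
        else none) with
      | some t => t
      | none => .var y) Δ.vars

/-- The inserted substitution `σ ≪_x τ : (Δ ≪_x Θ) → Γ`. -/
def insSub (S : LTree) (x : V) (T : LTree) (σ τ : Sub) : Sub :=
  mkSub (fun v => if v ∈ (T.ctx).vars then τ.find v else σ.find v) (insCtx S x T).vars

/-- Encoding of the disc variables `d_n^ε`. -/
def dvar (n : ℕ) (ε : Bool) : V := 2 * n + (if ε then 1 else 0)

/-- The type of the n-dimensional disc cells. -/
def discTy : ℕ → Ty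
  | 0 => .star
  | n + 1 => .arr (.var (dvar n false)) (discTy n) (.var (dvar n true))

/-- The disc contexts `D_n`. -/
def disc : ℕ → Ctx
  | 0 => .ext .nil (dvar 0 false) .star
  | n + 1 => .ext (.ext (disc n) (dvar n true) (discTy n)) (dvar (n + 1) false) (discTy (n + 1))

/-- `t̄ : D_n → Γ`, the substitution classifying an n-dimensional term t. -/
def bar (Γ : Ctx) (t : Tm) : Sub :=
  mkSub (fun v => Tm.bdry Γ (decide (v % 2 = 1)) (v / 2) t) (disc (Tm.dim Γ t)).vars

end Catt
-- part 5: the type theory Catt_sa : typing and definitional equality, mutually defined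
namespace Catt

mutual

/-- Context validity `Γ ⊢` in Catt_sa. -/
inductive WfCtx : Ctx → Prop
  | nil : WfCtx .nil
  | ext {Γ : Ctx} {x : V} {A : Ty} :
      WfCtx Γ → x ∉ Γ.varset → WfTy Γ A → WfCtx (.ext Γ x A)

/-- Type validity `Γ ⊢ A` in Catt_sa. -/
inductive WfTy : Ctx → Ty → Prop
  | star {Γ : Ctx} : WfCtx Γ → WfTy Γ .star
  | arr {Γ : Ctx} {s t : Tm} {A : Ty} :
      WfTy Γ A → WfTm Γ s A → WfTm Γ t A → WfTy Γ (.arr s A t)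

/-- Substitution typing `Δ ⊢ σ : Γ` in Catt_sa. -/
inductive WfSub : Ctx → Sub → Ctx → Prop
  | nil {Δ : Ctx} : WfCtx Δ → WfSub Δ .nil .nil
  | ext {Δ : Ctx} {σ : Sub} {Γ : Ctx} {A : Ty} {t : Tm} {x : V} :
      WfSub Δ σ Γ → WfTy Γ A → WfTm Δ t (A.sub σ) → x ∉ Γ.varset →
      WfSub Δ (.ext σ x t) (.ext Γ x A)

/-- Term typing `Γ ⊢ t : A` in Catt_sa: the rules (var'), (comp') and (coh'). -/
inductive WfTm : Ctx → Tm → Ty → Prop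
  | var {Γ : Ctx} {x : V} {B : Ty} :
      WfCtx Γ → x ∈ Γ.varset → EqTy (Γ.lookup x) B → WfTm Γ (.var x) B
  | comp {Γ Δ : Ctx} {s t : Tm} {A B : Ty} {σ : Sub} :
      IsPd Γ → WfTy Γ (.arr s A t) → WfSub Δ σ Γ →
      suppOf Γ (Tm.fv s) = Ctx.bdryVars false Γ →
      suppOf Γ (Tm.fv t) = Ctx.bdryVars true Γ →
      EqTy B (Ty.sub (.arr s A t) σ) →
      WfTm Δ (.coh Γ (.arr s A t) σ) B
  | coh {Γ Δ : Ctx} {A B : Ty} {σ : Sub} :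
      IsPd Γ → WfTy Γ A → WfSub Δ σ Γ →
      suppOf Γ (Ty.fv A) = Γ.varset →
      EqTy B (A.sub σ) →
      WfTm Δ (.coh Γ A σ) B

/-- Definitional equality on contexts in Catt_sa. -/
inductive EqCtx : Ctx → Ctx → Prop
  | nil : EqCtx .nil .nil
  | ext {Γ Γ' : Ctx} {x : V} {A A' : Ty} :
      EqCtx Γ Γ' → EqTy A A' → EqCtx (.ext Γ x A) (.ext Γ' x A')
  | symm {Γ Γ' : Ctx} : EqCtx Γ Γ' → EqCtx Γ' Γ
  | trans {Γ Γ' Γ'' : Ctx} : EqCtx Γ Γ' → EqCtx Γ' Γ'' → EqCtx Γ Γ''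

/-- Definitional equality on types in Catt_sa. -/
inductive EqTy : Ty → Ty → Prop
  | star : EqTy .star .star
  | arr {A A' : Ty} {s s' t t' : Tm} :
      EqTy A A' → EqTm s s' → EqTm t t' → EqTy (.arr s A t) (.arr s' A' t')
  | symm {A A' : Ty} : EqTy A A' → EqTy A' A
  | trans {A A' A'' : Ty} : EqTy A A' → EqTy A' A'' → EqTy A A''

/-- Definitional equality on substitutions in Catt_sa. -/
inductive EqSub : Sub → Sub → Prop
  | nil : EqSub .nil .nil
  | ext {σ σ' : Sub} {x : V} {t t' : Tm} :
      EqSub σ σ' → EqTm t t' → EqSub (.ext σ x t) (.ext σ' x t')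
  | symm {σ σ' : Sub} : EqSub σ σ' → EqSub σ' σ
  | trans {σ σ' σ'' : Sub} : EqSub σ σ' → EqSub σ' σ'' → EqSub σ σ''

/-- Definitional equality on terms in Catt_sa: the smallest congruence generated by
the insertion equations. -/
inductive EqTm : Tm → Tm → Prop
  | var (x : V) : EqTm (.var x) (.var x)
  | coh {Δ : Ctx} {A A' : Ty} {σ σ' : Sub} :
      EqTy A A' → EqSub σ σ' → EqTm (.coh Δ A σ) (.coh Δ A' σ')
  | symm {t t' : Tm} : EqTm t t' → EqTm t' t
  | trans {t t' t'' : Tm} : EqTm t t' → EqTm t' t'' → EqTm t t''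
  | insert {S T : LTree} {x : V} {A : Ty} {σ τ : Sub} {Γ : Ctx} {B : Ty} :
      WfTm Γ (.coh S.ctx A σ) B →
      T.wellLabelled →
      x ∈ S.locMax →
      (S.bp x).length ≤ T.lh →
      EqTm (σ.find x) (.coh T.ctx T.uty τ) →
      EqTm (.coh S.ctx A σ)
           (.coh (insCtx S x T) (A.sub (kappa S x T T.uty)) (insSub S x T σ τ))

end

/-- A substitution from a globular context respects the globular conditions. -/
def RespectsGlobular (Γ Δ : Ctx) (σ : Sub) : Prop :=
  ∀ (x : V) (s t : Tm) (A : Ty), (x, Ty.arr s A t) ∈ Γ.decls →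
    EqTm (Tm.src Δ (σ.find x)) (s.sub σ) ∧ EqTm (Tm.tgt Δ (σ.find x)) (t.sub σ)

/-- A substitution from a globular context Γ to Δ is well-formed if it respects the
globular conditions and sends every variable of Γ to a term well typed in Δ. -/
def WellFormedSub (Γ Δ : Ctx) (σ : Sub) : Prop :=
  RespectsGlobular Γ Δ σ ∧ ∀ x ∈ Γ.varset, ∃ B : Ty, WfTm Δ (σ.find x) B

def ValidTm (t : Tm) : Prop := ∃ (Γ : Ctx) (A : Ty), WfTm Γ t A
def ValidTy (A : Ty) : Prop := ∃ Γ : Ctx, WfTy Γ A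
def ValidSub (σ : Sub) : Prop := ∃ (Γ Δ : Ctx), WfSub Γ σ Δ

end Catt
-- part 6: reduction, syntactic depth, regular terms
namespace Catt

mutual

/-- Reduction on terms: insertion, cell reduction, argument reduction. -/
inductive RedTm : Tm → Tm → Prop
  | insert {S T : LTree} {x : V} {A : Ty} {σ τ : Sub} :
      T.wellLabelled →
      x ∈ S.locMax →
      (S.bp x).length ≤ T.lh →
      σ.find x = .coh T.ctx T.uty τ →
      RedTm (.coh S.ctx A σ)
            (.coh (insCtx S x T) (A.sub (kappa S x T T.uty)) (insSub S x T σ τ))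
  | cell {Δ : Ctx} {A A' : Ty} {σ : Sub} :
      RedTy A A' → RedTm (.coh Δ A σ) (.coh Δ A' σ)
  | arg {Δ : Ctx} {A : Ty} {σ σ' : Sub} :
      RedSub σ σ' → RedTm (.coh Δ A σ) (.coh Δ A σ')

/-- Reduction on types. -/
inductive RedTy : Ty → Ty → Prop
  | src {s s' t : Tm} {A : Ty} : RedTm s s' → RedTy (.arr s A t) (.arr s' A t)
  | tgt {s t t' : Tm} {A : Ty} : RedTm t t' → RedTy (.arr s A t) (.arr s A t')
  | base {s t : Tm} {A A' : Ty} : RedTy A A' → RedTy (.arr s A t) (.arr s A' t)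

/-- Reduction on substitutions. -/
inductive RedSub : Sub → Sub → Prop
  | here {σ : Sub} {x : V} {t t' : Tm} : RedTm t t' → RedSub (.ext σ x t) (.ext σ x t')
  | there {σ σ' : Sub} {x : V} {t : Tm} : RedSub σ σ' → RedSub (.ext σ x t) (.ext σ' x t)

end

/-- Reduction restricted to well-typed terms. -/
def RedTm' (s t : Tm) : Prop := RedTm s t ∧ ValidTm s ∧ ValidTm t
def RedTy' (A B : Ty) : Prop := RedTy A B ∧ ValidTy A ∧ ValidTy B
def RedSub' (σ τ : Sub) : Prop := RedSub σ τ ∧ ValidSub σ ∧ ValidSub τ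

/-- A term in normal form. -/
def NormalTm (t : Tm) : Prop := ∀ t' : Tm, ¬ RedTm t t'
def NormalTy (A : Ty) : Prop := ∀ A' : Ty, ¬ RedTy A A'
def NormalSub (σ : Sub) : Prop := ∀ σ' : Sub, ¬ RedSub σ σ'

end Catt

/-- Natural (Hessenberg) sum of ordinals, as in Mathlib of December 2024 (since removed). -/
noncomputable def Ordinal.nadd.{u} (a b : Ordinal.{u}) : Ordinal.{u} :=
  max (⨆ x : Set.Iio a, Order.succ (Ordinal.nadd x.1 b))
    (⨆ x : Set.Iio b, Order.succ (Ordinal.nadd a x.1))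
termination_by (a, b)
decreasing_by all_goals cases x; decreasing_tactic

namespace NaturalOps
scoped infixl:65 " ♯ " => Ordinal.nadd
end NaturalOps

namespace Catt

open NaturalOps in
-- the syntactic depth of terms, types and substitutions
mutual
noncomputable def sdTm : Tm → Ordinal.{0}
  | .var _ => 0
  | .coh _ A σ => Ordinal.omega0 ^ (A.dim : Ordinal.{0}) ♯ sdTy A ♯ sdSub σ
noncomputable def sdTy : Ty → Ordinal.{0}
  | .star => 0
  | .arr s A t => sdTm s ♯ sdTy A ♯ sdTm t
noncomputable def sdSub : Sub → Ordinal.{0}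
  | .nil => 0
  | .ext σ _ t => sdSub σ ♯ sdTm t
end

/-- `Regular t h` : the term t is regular with regular height h. -/
inductive Regular : Tm → ℕ∞ → Prop
  | var (x : V) : Regular (.var x) ⊤
  | coh {S : LTree} {σ : Sub} (hgt : Tm → ℕ∞) :
      S.wellLabelled →
      S.isLinear = false →
      (∀ t ∈ σ.terms, Regular t (hgt t)) →
      (∀ x ∈ S.locMax, Regular (σ.find x) (hgt (σ.find x))) →
      (∀ x ∈ S.locMax, ((S.bp x).length : ℕ∞) < hgt (σ.find x)) →
      Regular (.coh S.ctx S.uty σ) (S.lh : ℕ∞)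

/-- Restriction of a context to a set of variables. -/
def Ctx.restrict : Ctx → Finset V → Ctx
  | .nil, _ => .nil
  | .ext Γ x A, s => if x ∈ s then .ext (Γ.restrict s) x A else Γ.restrict s

end Catt
namespace Catt

/-!
Every typing rule of Catt_sa concludes with a type definitionally equal to the type the term
carries syntactically: the declared type `Γ(x)` of a variable, `A[σ]` for a coherence
`Coh Γ A σ`. For that syntactic type the claim holds on the nose, because taking boundaries of
types commutes with substitution. It remains to see that definitionally equal types have the
same dimension and definitionally equal boundaries, which holds since `EqTy` relates arrow
types only componentwise.
-/

theorem EqTy.dim_eq {A B : Ty} : EqTy A B → A.dim = B.dim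
  | .star => rfl
  | .arr hA _ _ => by rw [Ty.dim, Ty.dim, hA.dim_eq]
  | .symm h => h.dim_eq.symm
  | .trans h₁ h₂ => h₁.dim_eq.trans h₂.dim_eq

theorem EqTy.bdry {A B : Ty} (h : EqTy A B) (ε : Bool) (n : ℕ) (hn : n < A.dim) :
    EqTm (Ty.bdry ε n A) (Ty.bdry ε n B) := by
  match h with
  | .star => exact .var 0
  | .arr hA hs ht =>
    rw [Ty.bdry, Ty.bdry, ← hA.dim_eq]
    split_ifs
    · exact ht
    · exact hs
    · exact hA.bdry ε n (by rw [Ty.dim] at hn; omega)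
  | .symm h => exact (h.bdry ε n (h.dim_eq ▸ hn)).symm
  | .trans h₁ h₂ => exact (h₁.bdry ε n hn).trans (h₂.bdry ε n (h₁.dim_eq ▸ hn))

theorem Ty.dim_sub : ∀ (A : Ty) (σ : Sub), (A.sub σ).dim = A.dim
  | .star, _ => rfl
  | .arr _ A _, σ => by rw [Ty.sub, Ty.dim, Ty.dim, A.dim_sub σ]

theorem Ty.bdry_sub (ε : Bool) (n : ℕ) :
    ∀ (A : Ty) (σ : Sub), n < A.dim → Ty.bdry ε n (A.sub σ) = (Ty.bdry ε n A).sub σ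
  | .arr _ A _, σ, hn => by
    rw [Ty.sub, Ty.bdry, Ty.bdry, Ty.dim_sub]
    split_ifs
    · rfl
    · rfl
    · exact A.bdry_sub ε n σ (by rw [Ty.dim] at hn; omega)

def Tm.ty (Γ : Ctx) : Tm → Ty
  | .var x => Γ.lookup x
  | .coh _ A σ => A.sub σ

theorem Tm.dim_eq_dim_ty (Γ : Ctx) : ∀ t : Tm, Tm.dim Γ t = (t.ty Γ).dim
  | .var _ => rfl
  | .coh _ A σ => (A.dim_sub σ).symm

theorem Tm.bdry_eq_bdry_ty (Γ : Ctx) (ε : Bool) {n : ℕ} (t : Tm) (hn : n < (t.ty Γ).dim) :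
    Tm.bdry Γ ε n t = Ty.bdry ε n (t.ty Γ) := by
  have hdim : Tm.dim Γ t ≠ n := by rw [Tm.dim_eq_dim_ty]; omega
  match t with
  | .var _ => rw [Tm.bdry, if_neg hdim]; rfl
  | .coh _ A σ =>
    rw [Tm.bdry, if_neg hdim]
    exact (A.bdry_sub ε n σ (A.dim_sub σ ▸ hn)).symm

theorem WfTm.eqTy_ty {Γ : Ctx} {t : Tm} {A : Ty} : WfTm Γ t A → EqTy (t.ty Γ) A
  | .var _ _ h => h
  | .comp _ _ _ _ _ h => h.symm
  | .coh _ _ _ _ h => h.symm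

/-- if `Δ ⊢ u : A` in Catt_sa then for every `n < dim A` and ε the n-th
boundary of the term is definitionally equal to the n-th boundary of its type:
`δ^ε_n(u) = A^ε_n`. -/
theorem term_boundary_eq_type_boundary (Δ : Ctx) (u : Tm) (A : Ty)
    (h : WfTm Δ u A) :
    ∀ n < A.dim, ∀ ε : Bool, EqTm (Tm.bdry Δ ε n u) (Ty.bdry ε n A) := by
  intro n hn ε
  have hty : EqTy (u.ty Δ) A := h.eqTy_ty
  have hn' : n < (u.ty Δ).dim := hty.dim_eq ▸ hn
  rw [u.bdry_eq_bdry_ty Δ ε hn']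
  exact hty.bdry ε n hn'

end Catt
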